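/- arXiv:2510.06028 — 2 statements merged into one kernel-verified Lean document; each statement's English description precedes it below -/
import Mathlib

section
/- For any 0 < β < ∞, KL(G_β, G_{2β}) ≤ β (E_{h∼G_β}[L̂(h)] - E_{h∼G_{2β}}[L̂(h)]). -/
/-! The Gibbs posteriors form an exponential family: `G_γ` is the tilt of `G_δ` by `(δ - γ) L̂`,
so `log (dG_γ/dG_δ) = (δ - γ) L̂ + log Z_δ - log Z_γ`. The normalising constants cancel in the
symmetrised divergence, `KL(G_γ, G_δ) + KL(G_δ, G_γ) = (δ - γ) (E_{G_γ} L̂ - E_{G_δ} L̂)`, and the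
bound follows by dropping the term `KL(G_{2β}, G_β) ≥ 0` (Gibbs' inequality). -/

open MeasureTheory

/-- The partition function `Z_β(x) = ∫ exp (-β L̂(h,x)) dπ(h)` (the sample `x` is fixed). -/
noncomputable def partitionZ {H : Type*} [MeasurableSpace H] (pri : Measure H)
    (Lhat : H → ℝ) (β : ℝ) : ℝ :=
  ∫ h, Real.exp (-β * Lhat h) ∂pri

/-- The Gibbs posterior `G_β(x)`, with density `exp(-β L̂(h,x))/Z_β(x)` w.r.t. the prior `π`. -/
noncomputable def gibbs {H : Type*} [MeasurableSpace H] (pri : Measure H)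
    (Lhat : H → ℝ) (β : ℝ) : Measure H :=
  pri.withDensity (fun h => ENNReal.ofReal (Real.exp (-β * Lhat h) / partitionZ pri Lhat β))

/-- Kullback–Leibler divergence `KL(ρ,ν) = ∫ ln (dρ/dν) dρ`. -/
noncomputable def klDiv {H : Type*} [MeasurableSpace H] (ρ ν : Measure H) : ℝ :=
  ∫ h, Real.log ((ρ.rnDeriv ν h).toReal) ∂ρ

open Real

namespace MeasureTheory

variable {α : Type*} [MeasurableSpace α] {μ : Measure α} [NeZero μ] {f g : α → ℝ}

lemma llr_tilted_tilted (hf : Integrable (fun x ↦ exp (f x)) μ)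
    (hg : Integrable (fun x ↦ exp (g x)) μ) :
    llr (μ.tilted f) (μ.tilted g) =ᵐ[μ.tilted f]
      fun x ↦ f x - g x - log (∫ x, exp (f x) ∂μ) + log (∫ x, exp (g x) ∂μ) := by
  have h_retilt : μ.tilted f = (μ.tilted g).tilted (fun x ↦ f x - g x) := by
    rw [tilted_tilted hg]
    congr with x
    simp
  have h_int : Integrable (fun x ↦ exp (f x - g x)) (μ.tilted g) := by
    rw [integrable_tilted_iff hg]
    simpa [← exp_add] using hf
  have h_norm : ∫ x, exp (f x - g x) ∂(μ.tilted g)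
      = (∫ x, exp (f x) ∂μ) / ∫ x, exp (g x) ∂μ := by
    rw [integral_exp_tilted]
    simp
  rw [h_retilt]
  filter_upwards [(tilted_absolutelyContinuous _ _).ae_le
    (log_rnDeriv_tilted_left_self h_int)] with x hx
  rw [llr, hx, h_norm, log_div (integral_exp_pos hf).ne' (integral_exp_pos hg).ne']
  ring

lemma integrable_llr_tilted_tilted (hf : Integrable (fun x ↦ exp (f x)) μ)
    (hg : Integrable (fun x ↦ exp (g x)) μ)
    (hfg : Integrable (fun x ↦ f x - g x) (μ.tilted f)) :
    Integrable (llr (μ.tilted f) (μ.tilted g)) (μ.tilted f) :=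
  (integrable_congr (llr_tilted_tilted hf hg)).2 ((hfg.sub (integrable_const _)).add
    (integrable_const _))

lemma integral_llr_tilted_tilted (hf : Integrable (fun x ↦ exp (f x)) μ)
    (hg : Integrable (fun x ↦ exp (g x)) μ)
    (hfg : Integrable (fun x ↦ f x - g x) (μ.tilted f)) :
    ∫ x, llr (μ.tilted f) (μ.tilted g) x ∂(μ.tilted f)
      = ∫ x, (f x - g x) ∂(μ.tilted f) - log (∫ x, exp (f x) ∂μ)
          + log (∫ x, exp (g x) ∂μ) := by
  have := isProbabilityMeasure_tilted hf
  have h_int : Integrable (fun x ↦ f x - g x - log (∫ x, exp (f x) ∂μ)) (μ.tilted f) :=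
    hfg.sub (integrable_const _)
  rw [integral_congr_ae (llr_tilted_tilted hf hg), integral_add h_int (integrable_const _),
    integral_sub hfg (integrable_const _)]
  simp

lemma integral_llr_tilted_tilted_add_swap (hf : Integrable (fun x ↦ exp (f x)) μ)
    (hg : Integrable (fun x ↦ exp (g x)) μ)
    (hfg : Integrable (fun x ↦ f x - g x) (μ.tilted f))
    (hgf : Integrable (fun x ↦ g x - f x) (μ.tilted g)) :
    ∫ x, llr (μ.tilted f) (μ.tilted g) x ∂(μ.tilted f)
        + ∫ x, llr (μ.tilted g) (μ.tilted f) x ∂(μ.tilted g)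
      = ∫ x, (f x - g x) ∂(μ.tilted f) - ∫ x, (f x - g x) ∂(μ.tilted g) := by
  have h_antisymm : ∫ x, (f x - g x) ∂(μ.tilted g) = -∫ x, (g x - f x) ∂(μ.tilted g) := by
    rw [← integral_neg]
    simp
  rw [integral_llr_tilted_tilted hf hg hfg, integral_llr_tilted_tilted hg hf hgf, h_antisymm]
  ring

lemma integral_llr_tilted_tilted_nonneg (hf : Integrable (fun x ↦ exp (f x)) μ)
    (hg : Integrable (fun x ↦ exp (g x)) μ)
    (hfg : Integrable (fun x ↦ f x - g x) (μ.tilted f)) :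
    0 ≤ ∫ x, llr (μ.tilted f) (μ.tilted g) x ∂(μ.tilted f) := by
  have := isProbabilityMeasure_tilted hf
  have := isProbabilityMeasure_tilted hg
  simpa using InformationTheory.integral_llr_add_sub_measure_univ_nonneg
    ((tilted_absolutelyContinuous μ f).trans (absolutelyContinuous_tilted hg))
    (integrable_llr_tilted_tilted hf hg hfg)

end MeasureTheory

section Gibbs

variable {H : Type*} [MeasurableSpace H] {Lhat : H → ℝ} {m : ℝ}

lemma gibbs_eq_tilted (pri : Measure H) (Lhat : H → ℝ) (γ : ℝ) :
    gibbs pri Lhat γ = pri.tilted (fun h ↦ -γ * Lhat h) :=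
  rfl

lemma integrable_exp_const_mul_of_abs_le {ν : Measure H} [IsFiniteMeasure ν]
    (hmeas : Measurable Lhat) (hbdd : ∀ h, |Lhat h| ≤ m) (c : ℝ) :
    Integrable (fun h ↦ exp (c * Lhat h)) ν := by
  refine .of_bound (hmeas.const_mul c).exp.aestronglyMeasurable (exp (|c| * m))
    (ae_of_all _ fun h ↦ ?_)
  rw [Real.norm_eq_abs, abs_exp, exp_le_exp]
  calc c * Lhat h ≤ |c * Lhat h| := le_abs_self _
    _ = |c| * |Lhat h| := abs_mul _ _
    _ ≤ |c| * m := mul_le_mul_of_nonneg_left (hbdd h) (abs_nonneg c)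

lemma integrable_of_abs_le (ν : Measure H) [IsFiniteMeasure ν] (hmeas : Measurable Lhat)
    (hbdd : ∀ h, |Lhat h| ≤ m) : Integrable Lhat ν :=
  .of_bound hmeas.aestronglyMeasurable m (ae_of_all _ hbdd)

variable {pri : Measure H} [IsFiniteMeasure pri] [NeZero pri]

lemma klDiv_gibbs_add_klDiv_gibbs (hmeas : Measurable Lhat) (hbdd : ∀ h, |Lhat h| ≤ m)
    (γ δ : ℝ) :
    klDiv (gibbs pri Lhat γ) (gibbs pri Lhat δ) + klDiv (gibbs pri Lhat δ) (gibbs pri Lhat γ)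
      = (δ - γ) * ((∫ h, Lhat h ∂(gibbs pri Lhat γ)) - ∫ h, Lhat h ∂(gibbs pri Lhat δ)) := by
  have hL (ν : Measure H) [IsFiniteMeasure ν] := integrable_of_abs_le ν hmeas hbdd
  have h_exponent (ν : Measure H) :
      ∫ h, (-γ * Lhat h - -δ * Lhat h) ∂ν = (δ - γ) * ∫ h, Lhat h ∂ν := by
    rw [← integral_const_mul]
    congr with h
    ring
  simp only [gibbs_eq_tilted]
  rw [mul_sub, ← h_exponent, ← h_exponent]
  exact integral_llr_tilted_tilted_add_swap
    (integrable_exp_const_mul_of_abs_le hmeas hbdd (-γ))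
    (integrable_exp_const_mul_of_abs_le hmeas hbdd (-δ))
    (((hL _).const_mul (-γ)).sub ((hL _).const_mul (-δ)))
    (((hL _).const_mul (-δ)).sub ((hL _).const_mul (-γ)))

lemma klDiv_gibbs_nonneg (hmeas : Measurable Lhat) (hbdd : ∀ h, |Lhat h| ≤ m) (γ δ : ℝ) :
    0 ≤ klDiv (gibbs pri Lhat γ) (gibbs pri Lhat δ) := by
  have hL (ν : Measure H) [IsFiniteMeasure ν] := integrable_of_abs_le ν hmeas hbdd
  simp only [gibbs_eq_tilted]
  exact integral_llr_tilted_tilted_nonneg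
    (integrable_exp_const_mul_of_abs_le hmeas hbdd (-γ))
    (integrable_exp_const_mul_of_abs_le hmeas hbdd (-δ))
    (((hL _).const_mul (-γ)).sub ((hL _).const_mul (-δ)))

end Gibbs

theorem klDiv_gibbs_le_general {H : Type*} [MeasurableSpace H]
    (pri : Measure H) [IsProbabilityMeasure pri]
    (Lhat : H → ℝ) (hmeas : Measurable Lhat) (hnonneg : ∀ h, 0 ≤ Lhat h)
    (m : ℝ) (hbound : ∀ h, Lhat h ≤ m) (β : ℝ) :
    klDiv (gibbs pri Lhat β) (gibbs pri Lhat (2 * β))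
      ≤ β * ((∫ h, Lhat h ∂(gibbs pri Lhat β))
              - (∫ h, Lhat h ∂(gibbs pri Lhat (2 * β)))) := by
  have hbdd (h : H) : |Lhat h| ≤ m := abs_le.2 ⟨by linarith [hnonneg h, hbound h], hbound h⟩
  have h_sym := klDiv_gibbs_add_klDiv_gibbs (pri := pri) hmeas hbdd β (2 * β)
  have h_nonneg := klDiv_gibbs_nonneg (pri := pri) hmeas hbdd (2 * β) β
  rw [show 2 * β - β = β by ring] at h_sym
  linarith

/-- for `0 < β < ∞`,
`KL(G_β, G_{2β}) ≤ β (E_{G_β}[L̂] - E_{G_{2β}}[L̂])`. -/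
theorem klDiv_gibbs_le {H : Type*} [MeasurableSpace H]
    (pri : Measure H) [IsProbabilityMeasure pri]
    (Lhat : H → ℝ) (hmeas : Measurable Lhat) (hnonneg : ∀ h, 0 ≤ Lhat h)
    (m : ℝ) (hbound : ∀ h, Lhat h ≤ m) (β : ℝ) (hβ : 0 < β) :
    klDiv (gibbs pri Lhat β) (gibbs pri Lhat (2 * β))
      ≤ β * ((∫ h, Lhat h ∂(gibbs pri Lhat β))
              - (∫ h, Lhat h ∂(gibbs pri Lhat (2 * β)))) :=
  klDiv_gibbs_le_general pri Lhat hmeas hnonneg m hbound β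
end

section
/- Let f: H × X → [0,1] be measurable, δ > 0 and n ≥ 8. Assume the exponential moment bound E_x[e^{n κ((1/n)Σᵢ f(h,xᵢ), E_x f(h,x))}] ≤ 2√n for every h. Then with probability at least 1-δ in x ∼ μⁿ and h ∼ G_β(x): κ((1/n)Σᵢ f(h,xᵢ), E_x[f(h,x)]) ≤ (1/n)(Γ(h,x,β⃗) + ln(2√n/δ)). -/
open MeasureTheory

/-- Empirical loss `L̂(h,x) = (1/n) Σ_i ℓ(h,x_i)`. -/
noncomputable def empLoss {H X : Type*} (n : ℕ) (ℓ : H → X → ℝ) (h : H) (x : Fin n → X) : ℝ :=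
  (∑ i, ℓ h (x i)) / n

/-- Partition function `Z_β(x) = ∫ exp(-β L̂(h,x)) dπ(h)`. -/
noncomputable def partZ {H X : Type*} [MeasurableSpace H] (pri : Measure H) (n : ℕ)
    (ℓ : H → X → ℝ) (β : ℝ) (x : Fin n → X) : ℝ :=
  ∫ h, Real.exp (-β * empLoss n ℓ h x) ∂pri

/-- Gibbs posterior `G_β(x)` with density `exp(-β L̂(h,x))/Z_β(x)` w.r.t. the prior. -/
noncomputable def gibbsP {H X : Type*} [MeasurableSpace H] (pri : Measure H) (n : ℕ)
    (ℓ : H → X → ℝ) (β : ℝ) (x : Fin n → X) : Measure H :=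
  pri.withDensity fun h =>
    ENNReal.ofReal (Real.exp (-β * empLoss n ℓ h x) / partZ pri n ℓ β x)

/-- The bounding functional
`Γ(h,x,β⃗) = -β_K L̂(h,x) + Σ_{k=1}^K (β_k-β_{k-1}) E_{g∼G_{β_{k-1}}(x)}[L̂(g,x)]`. -/
noncomputable def Gam {H X : Type*} [MeasurableSpace H] (pri : Measure H) (n : ℕ)
    (ℓ : H → X → ℝ) {K : ℕ} (βs : Fin (K + 1) → ℝ) (h : H) (x : Fin n → X) : ℝ :=
  -βs (Fin.last K) * empLoss n ℓ h x
    + ∑ k : Fin K, (βs k.succ - βs k.castSucc)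
        * ∫ g, empLoss n ℓ g x ∂(gibbsP pri n ℓ (βs k.castSucc) x)

/-- Binary relative entropy `κ(p,q) = p ln(p/q) + (1-p) ln((1-p)/(1-q))`. -/
noncomputable def kappa (p q : ℝ) : ℝ :=
  p * Real.log (p / q) + (1 - p) * Real.log ((1 - p) / (1 - q))

/-!
For a fixed sample `x`, `G_β(x)` has log-density `-β L̂(h,x) - log Z_β(x)` with respect to the
prior. Jensen's inequality for `exp` under `G_s(x)` gives
`log Z_s - log Z_t ≤ (t - s) E_{G_s(x)}[L̂]` for `s ≤ t`, and telescoping along the partition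
(with `Z_0 = 1`) bounds this log-density by `Γ(h,x,β⃗)`. On the bad event the density is therefore
at most `exp(n κ) δ / (2√n)`, so the event has `G_β(x)`-mass at most `δ / (2√n) E_π[exp(n κ)]`.
Averaging over `x`, exchanging the two integrals and applying the exponential moment bound for
each `h` leaves `δ`.
-/

open Real
open scoped ENNReal

theorem Fin.sum_succ_sub_castSucc {M : Type*} [AddCommGroup M] {K : ℕ} (g : Fin (K + 1) → M) :
    ∑ k : Fin K, (g k.succ - g k.castSucc) = g (Fin.last K) - g 0 := by
  induction K with
  | zero => simp
  | succ K ih =>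
    rw [Fin.sum_univ_castSucc, Fin.succ_last]
    simp only [Fin.succ_castSucc]
    rw [ih fun k => g k.castSucc, Fin.castSucc_zero, sub_add_sub_cancel']

theorem mul_log_div_le_abs_log {p q : ℝ} (hp0 : 0 ≤ p) (hp1 : p ≤ 1) :
    p * log (p / q) ≤ |log q| := by
  rcases eq_or_ne p 0 with rfl | hp
  · simp
  rcases eq_or_ne q 0 with rfl | hq
  · simp
  rw [log_div hp hq]
  nlinarith [log_nonpos hp0 hp1, neg_le_abs (log q), abs_nonneg (log q)]

theorem kappa_le_abs_log_add_abs_log {p q : ℝ} (hp0 : 0 ≤ p) (hp1 : p ≤ 1) :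
    kappa p q ≤ |log q| + |log (1 - q)| :=
  add_le_add (mul_log_div_le_abs_log hp0 hp1)
    (mul_log_div_le_abs_log (sub_nonneg.2 hp1) (by linarith))

theorem Measurable.kappa {α : Type*} [MeasurableSpace α] {p q : α → ℝ} (hp : Measurable p)
    (hq : Measurable q) : Measurable fun a => _root_.kappa (p a) (q a) := by
  unfold _root_.kappa
  fun_prop

theorem integrable_exp_mul_kappa {Y : Type*} [MeasurableSpace Y] {ν : Measure Y}
    [IsFiniteMeasure ν] {p : Y → ℝ} (hp : Measurable p) (hp0 : ∀ y, 0 ≤ p y) (hp1 : ∀ y, p y ≤ 1)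
    {a : ℝ} (ha : 0 ≤ a) (q c : ℝ) : Integrable (fun y => exp (a * kappa (p y) q - c)) ν := by
  have hmeas : Measurable fun y => exp (a * kappa (p y) q - c) :=
    ((hp.kappa measurable_const).const_mul a |>.sub_const c).exp
  refine .of_bound hmeas.aestronglyMeasurable (exp (a * (|log q| + |log (1 - q)|) - c))
    (ae_of_all _ fun y => ?_)
  rw [norm_of_nonneg (exp_pos _).le, exp_le_exp, sub_le_sub_iff_right]
  exact mul_le_mul_of_nonneg_left (kappa_le_abs_log_add_abs_log (hp0 y) (hp1 y)) ha

section EmpiricalLoss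

variable {H X : Type*} {n : ℕ} {ℓ : H → X → ℝ}

theorem empLoss_nonneg (hℓ : ∀ h y, 0 ≤ ℓ h y) (h : H) (x : Fin n → X) :
    0 ≤ empLoss n ℓ h x :=
  div_nonneg (Finset.sum_nonneg fun i _ => hℓ h (x i)) n.cast_nonneg

theorem empLoss_le {m : ℝ} (hn : 0 < n) (hℓ : ∀ h y, ℓ h y ≤ m) (h : H) (x : Fin n → X) :
    empLoss n ℓ h x ≤ m := by
  rw [empLoss, div_le_iff₀ (by positivity)]
  simpa [mul_comm] using Finset.sum_le_sum fun i (_ : i ∈ Finset.univ) => hℓ h (x i)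

theorem measurable_empLoss [MeasurableSpace H] [MeasurableSpace X]
    (hℓ : Measurable fun p : H × X => ℓ p.1 p.2) :
    Measurable fun p : H × (Fin n → X) => empLoss n ℓ p.1 p.2 := by
  unfold empLoss
  fun_prop

end EmpiricalLoss

theorem lintegral_lintegral_ofReal_le {H Y : Type*} [MeasurableSpace H] [MeasurableSpace Y]
    {μ : Measure H} [IsProbabilityMeasure μ] {ν : Measure Y} [SFinite ν] {F : H → Y → ℝ}
    (hF : Measurable (Function.uncurry F)) (hF0 : ∀ h y, 0 ≤ F h y)
    (hint : ∀ h, Integrable (F h) ν) {B : ℝ} (hB : ∀ h, ∫ y, F h y ∂ν ≤ B) :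
    ∫⁻ y, ∫⁻ h, ENNReal.ofReal (F h y) ∂μ ∂ν ≤ ENNReal.ofReal B := by
  rw [lintegral_lintegral_swap (hF.comp measurable_swap).ennreal_ofReal.aemeasurable]
  calc ∫⁻ h, ∫⁻ y, ENNReal.ofReal (F h y) ∂ν ∂μ ≤ ∫⁻ _, ENNReal.ofReal B ∂μ := by
        refine lintegral_mono fun h => ?_
        rw [← ofReal_integral_eq_lintegral_ofReal (hint h) (ae_of_all _ (hF0 h))]
        exact ENNReal.ofReal_le_ofReal (hB h)
    _ = ENNReal.ofReal B := by simp

section Tilted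

variable {H : Type*} [MeasurableSpace H] {μ : Measure H}

theorem tilted_apply_le_lintegral_exp {g φ : H → ℝ} {S : Set H} (hS : MeasurableSet S)
    (hle : ∀ h ∈ S, g h - log (∫ y, exp (g y) ∂μ) ≤ φ h) :
    μ.tilted g S ≤ ∫⁻ h, ENNReal.ofReal (exp (φ h)) ∂μ := by
  rw [tilted_apply' _ _ hS]
  refine (setLIntegral_mono' hS fun h hh => ENNReal.ofReal_le_ofReal ?_).trans
    (setLIntegral_le_lintegral _ _)
  have hZ0 : 0 ≤ ∫ y, exp (g y) ∂μ := integral_nonneg fun y => (exp_pos _).le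
  rcases hZ0.eq_or_lt with hZ | hZ
  · rw [← hZ, div_zero]
    exact (exp_pos _).le
  · rw [← exp_log hZ, ← exp_sub]
    exact exp_le_exp.2 (hle h hh)

variable {L : H → ℝ} {m s t : ℝ}

theorem integrable_exp_neg_mul [IsFiniteMeasure μ] (hL : Measurable L) (hL0 : ∀ h, 0 ≤ L h)
    (ht : 0 ≤ t) : Integrable (fun h => exp (-t * L h)) μ :=
  .of_bound (by fun_prop) 1 <| ae_of_all _ fun h => by
    rw [norm_of_nonneg (exp_pos _).le, exp_le_one_iff]
    nlinarith [hL0 h]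

theorem log_integral_exp_sub_le [IsProbabilityMeasure μ] (hL : Measurable L)
    (hL0 : ∀ h, 0 ≤ L h) (hLm : ∀ h, L h ≤ m) (hs : 0 ≤ s) (hst : s ≤ t) :
    log (∫ h, exp (-s * L h) ∂μ) - log (∫ h, exp (-t * L h) ∂μ)
      ≤ (t - s) * ∫ h, L h ∂(μ.tilted fun h => -s * L h) := by
  set G := μ.tilted fun h => -s * L h
  have : IsProbabilityMeasure G := isProbabilityMeasure_tilted (integrable_exp_neg_mul hL hL0 hs)
  have hZs := integral_exp_pos (μ := μ) (integrable_exp_neg_mul hL hL0 hs)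
  have hZt := integral_exp_pos (μ := μ) (integrable_exp_neg_mul hL hL0 (hs.trans hst))
  have hLint : Integrable L G := .of_bound hL.aestronglyMeasurable m <| ae_of_all _ fun h => by
    rw [norm_of_nonneg (hL0 h)]
    exact hLm h
  have hratio : ∫ h, exp (-(t - s) * L h) ∂G
      = (∫ h, exp (-t * L h) ∂μ) / ∫ h, exp (-s * L h) ∂μ := by
    rw [integral_exp_tilted]
    congr with h
    simp only [Pi.add_apply]
    ring_nf
  have hjensen : exp (∫ h, -(t - s) * L h ∂G) ≤ ∫ h, exp (-(t - s) * L h) ∂G :=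
    convexOn_exp.map_integral_le continuousOn_exp isClosed_univ (ae_of_all _ fun _ => trivial)
      (hLint.const_mul _) (integrable_exp_neg_mul hL hL0 (sub_nonneg.2 hst))
  rw [hratio, integral_const_mul, ← log_le_log_iff (exp_pos _) (div_pos hZt hZs), log_exp,
    log_div hZt.ne' hZs.ne'] at hjensen
  linarith

theorem neg_log_integral_exp_le_sum [IsProbabilityMeasure μ] (hL : Measurable L)
    (hL0 : ∀ h, 0 ≤ L h) (hLm : ∀ h, L h ≤ m) {K : ℕ} {βs : Fin (K + 1) → ℝ}
    (hmono : Monotone βs) (h0 : βs 0 = 0) :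
    -log (∫ h, exp (-βs (Fin.last K) * L h) ∂μ)
      ≤ ∑ k : Fin K, (βs k.succ - βs k.castSucc)
          * ∫ h, L h ∂(μ.tilted fun h => -βs k.castSucc * L h) := by
  have hnonneg : ∀ k, 0 ≤ βs k := fun k => h0 ▸ hmono (Fin.zero_le k)
  calc -log (∫ h, exp (-βs (Fin.last K) * L h) ∂μ)
      = ∑ k : Fin K, (log (∫ h, exp (-βs k.castSucc * L h) ∂μ)
          - log (∫ h, exp (-βs k.succ * L h) ∂μ)) := by
        rw [Finset.sum_sub_distrib, ← neg_sub, ← Finset.sum_sub_distrib,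
          Fin.sum_succ_sub_castSucc fun k => log (∫ h, exp (-βs k * L h) ∂μ), h0]
        simp
    _ ≤ _ := Finset.sum_le_sum fun k _ => log_integral_exp_sub_le hL hL0 hLm (hnonneg _)
        (hmono Fin.castSucc_lt_succ.le)

end Tilted

-- `gibbsP pri n ℓ t x` is by definition `pri.tilted fun h => -t * empLoss n ℓ h x`.
theorem neg_mul_empLoss_sub_log_partZ_le_Gam {H X : Type*} [MeasurableSpace H] {pri : Measure H}
    [IsProbabilityMeasure pri] {n : ℕ} {ℓ : H → X → ℝ} {m : ℝ} {x : Fin n → X}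
    (hL : Measurable fun h => empLoss n ℓ h x) (hL0 : ∀ h, 0 ≤ empLoss n ℓ h x)
    (hLm : ∀ h, empLoss n ℓ h x ≤ m) {K : ℕ} {βs : Fin (K + 1) → ℝ} (hmono : Monotone βs)
    (h0 : βs 0 = 0) (h : H) :
    -βs (Fin.last K) * empLoss n ℓ h x - log (partZ pri n ℓ (βs (Fin.last K)) x)
      ≤ Gam pri n ℓ βs h x := by
  have := neg_log_integral_exp_le_sum (μ := pri) hL hL0 hLm hmono h0
  rw [Gam, sub_eq_add_neg]
  exact add_le_add le_rfl this

theorem gibbsP_setOf_Gam_lt_le_lintegral_exp {H X : Type*} [MeasurableSpace H] [MeasurableSpace X]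
    {pri : Measure H} [IsProbabilityMeasure pri] {n : ℕ} (hn : 0 < n) {ℓ : H → X → ℝ}
    (hℓmeas : Measurable fun p : H × X => ℓ p.1 p.2) {m : ℝ} (hℓnonneg : ∀ h y, 0 ≤ ℓ h y)
    (hℓbound : ∀ h y, ℓ h y ≤ m) {K : ℕ} {βs : Fin (K + 1) → ℝ} (hmono : Monotone βs)
    (h0 : βs 0 = 0) {φ : H → ℝ} (hφ : Measurable φ) (c : ℝ) (x : Fin n → X) :
    gibbsP pri n ℓ (βs (Fin.last K)) x {h | 1 / (n : ℝ) * (Gam pri n ℓ βs h x + c) < φ h}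
      ≤ ∫⁻ h, ENNReal.ofReal (exp (n * φ h - c)) ∂pri := by
  have hL : Measurable fun h => empLoss n ℓ h x :=
    (measurable_empLoss hℓmeas).comp measurable_prodMk_right
  have hGam : Measurable fun h => Gam pri n ℓ βs h x := (hL.const_mul _).add_const _
  refine tilted_apply_le_lintegral_exp (measurableSet_lt ((hGam.add_const c).const_mul _) hφ)
    fun h hh => ?_
  rw [Set.mem_ofPred_eq, one_div, inv_mul_lt_iff₀ (by positivity)] at hh
  have := neg_mul_empLoss_sub_log_partZ_le_Gam (pri := pri) hL (empLoss_nonneg hℓnonneg · x)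
    (empLoss_le hn hℓbound · x) hmono h0 h
  unfold partZ at this
  linarith

theorem kl_bound_single_draw_general {H X : Type*} [MeasurableSpace H] [MeasurableSpace X]
    (μ : Measure X) [IsProbabilityMeasure μ]
    (pri : Measure H) [IsProbabilityMeasure pri]
    (n : ℕ) (hn : 8 ≤ n)
    (ℓ : H → X → ℝ) (hℓmeas : Measurable fun p : H × X => ℓ p.1 p.2)
    (m : ℝ) (hℓnonneg : ∀ h x, 0 ≤ ℓ h x) (hℓbound : ∀ h x, ℓ h x ≤ m)
    (K : ℕ) (βs : Fin (K + 1) → ℝ)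
    (hmono : StrictMono βs) (h0 : βs 0 = 0)
    (β : ℝ) (hβ : βs (Fin.last K) = β)
    (f : H → X → ℝ) (hfmeas : Measurable fun p : H × X => f p.1 p.2)
    (hf0 : ∀ h x, 0 ≤ f h x) (hf1 : ∀ h x, f h x ≤ 1)
    (hexp : ∀ h, ∫ x, Real.exp ((n : ℝ) * kappa (empLoss n f h x) (∫ y, f h y ∂μ))
        ∂(Measure.pi fun _ : Fin n => μ) ≤ 2 * Real.sqrt n)
    (δ : ℝ) (hδ : 0 < δ) :
    ∫⁻ x, (gibbsP pri n ℓ β x)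
        {h | (1 / (n : ℝ)) * (Gam pri n ℓ βs h x + Real.log (2 * Real.sqrt n / δ))
              < kappa (empLoss n f h x) (∫ y, f h y ∂μ)}
      ∂(Measure.pi fun _ : Fin n => μ) ≤ ENNReal.ofReal δ := by
  subst hβ
  have hn0 : 0 < n := by omega
  have hf : Measurable fun p : H × (Fin n → X) => empLoss n f p.1 p.2 := measurable_empLoss hfmeas
  have hκ : Measurable fun p : H × (Fin n → X) => kappa (empLoss n f p.1 p.2) (∫ y, f p.1 y ∂μ) :=
    hf.kappa (hfmeas.stronglyMeasurable.integral_prod_right'.measurable.comp measurable_fst)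
  refine (lintegral_mono fun x => gibbsP_setOf_Gam_lt_le_lintegral_exp hn0 hℓmeas hℓnonneg
    hℓbound hmono.monotone h0 (φ := fun h => kappa (empLoss n f h x) (∫ y, f h y ∂μ))
    (hκ.comp measurable_prodMk_right) _ x).trans
    (lintegral_lintegral_ofReal_le (by fun_prop) (fun _ _ => (exp_pos _).le)
      (fun h => integrable_exp_mul_kappa (hf.comp measurable_prodMk_left) (empLoss_nonneg hf0 h)
        (empLoss_le hn0 hf1 h) n.cast_nonneg _ _) (fun h => ?_))
  calc ∫ x, exp (n * kappa (empLoss n f h x) (∫ y, f h y ∂μ) - log (2 * sqrt n / δ))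
        ∂Measure.pi (fun _ => μ)
      = (∫ x, exp (n * kappa (empLoss n f h x) (∫ y, f h y ∂μ)) ∂Measure.pi (fun _ => μ))
          / (2 * sqrt n / δ) := by
        simp_rw [exp_sub, exp_log (show 0 < 2 * sqrt n / δ by positivity)]
        exact integral_div _ _
    _ ≤ 2 * sqrt n / (2 * sqrt n / δ) := by gcongr; exact hexp h
    _ = δ := by field_simp

/-- for `f : H × X → [0,1]`, `n ≥ 8`, with probability at least `1-δ` in
`x ∼ μⁿ` and `h ∼ G_β(x)`:
`κ((1/n)Σᵢ f(h,xᵢ), E_x[f(h,x)]) ≤ (1/n)(Γ(h,x,β⃗) + ln(2√n/δ))`. -/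
theorem kl_bound_single_draw {H X : Type*} [MeasurableSpace H] [MeasurableSpace X]
    (μ : Measure X) [IsProbabilityMeasure μ]
    (pri : Measure H) [IsProbabilityMeasure pri]
    (n : ℕ) (hn : 8 ≤ n)
    (ℓ : H → X → ℝ) (hℓmeas : Measurable fun p : H × X => ℓ p.1 p.2)
    (m : ℝ) (hℓnonneg : ∀ h x, 0 ≤ ℓ h x) (hℓbound : ∀ h x, ℓ h x ≤ m)
    (K : ℕ) (hK : 0 < K) (βs : Fin (K + 1) → ℝ)
    (hmono : StrictMono βs) (h0 : βs 0 = 0)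
    (β : ℝ) (hβ : βs (Fin.last K) = β) (hβpos : 0 < β)
    (f : H → X → ℝ) (hfmeas : Measurable fun p : H × X => f p.1 p.2)
    (hf0 : ∀ h x, 0 ≤ f h x) (hf1 : ∀ h x, f h x ≤ 1)
    (hexp : ∀ h, ∫ x, Real.exp ((n : ℝ) * kappa (empLoss n f h x) (∫ y, f h y ∂μ))
        ∂(Measure.pi fun _ : Fin n => μ) ≤ 2 * Real.sqrt n)
    (δ : ℝ) (hδ : 0 < δ) :
    ∫⁻ x, (gibbsP pri n ℓ β x)
        {h | (1 / (n : ℝ)) * (Gam pri n ℓ βs h x + Real.log (2 * Real.sqrt n / δ))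
              < kappa (empLoss n f h x) (∫ y, f h y ∂μ)}
      ∂(Measure.pi fun _ : Fin n => μ) ≤ ENNReal.ofReal δ :=
  kl_bound_single_draw_general μ pri n hn ℓ hℓmeas m hℓnonneg hℓbound K βs hmono h0 β hβ f hfmeas
    hf0 hf1 hexp δ hδ
end
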